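/- arXiv:math/9810179 — 5 statements merged into one kernel-verified Lean document; each statement's English description precedes it below -/
import Mathlib

section
/- If the Continuum Hypothesis holds, then for every function f : ℝ × ℝ → ℝ there exist functions g⁰ₙ, g¹ₙ : ℝ → ℝ (for n < ω) such that for all x, y ∈ ℝ the series Σₙ g⁰ₙ(x)·g¹ₙ(y) converges to f(x,y). -/
/-!
Under CH the reals can be well-ordered so that every real has only countably many predecessors.
Along this order assign to each `x` the vectors `gₓ = (g⁰ₙ x)ₙ` and `hₓ = (g¹ₙ x)ₙ` in `ℝ^ℕ`,
keeping all their supports infinite and pairwise almost disjoint; then each series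
`∑ₙ gₓ(n) hᵧ(n)` has only finitely many nonzero terms. A new vector `w` must satisfy countably
many equations `∑ₙ w(n) uₖ(n) = cₖ`, one for each earlier vector `uₖ`. Choosing coordinates
`p₀ < p₁ < ⋯` with `pₖ` in the support of `uₖ` but outside those of `u₀, …, uₖ₋₁` makes this
system lower triangular, so it is solved by forward substitution, and the support of `w` meets
that of each `uₖ` in finitely many points.
-/

open Set Function

def IsAlmostDisjointFamily {ι α : Type*} (A : ι → Set α) : Prop :=
  (∀ i, (A i).Infinite) ∧ Pairwise fun i j => (A i ∩ A j).Finite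

theorem exists_strictMono_forall_mem (s : ℕ → Set ℕ) (hs : ∀ n, (s n).Infinite) :
    ∃ z : ℕ → ℕ, StrictMono z ∧ ∀ n, z n ∈ s n := by
  choose next hnext using fun n m => (hs n).exists_gt m
  let z : ℕ → ℕ := fun n => Nat.rec (next 0 0) (fun n zn => next (n + 1) zn) n
  refine ⟨z, strictMono_nat_of_lt_succ fun n => (hnext (n + 1) (z n)).2, ?_⟩
  rintro (_ | n)
  exacts [(hnext 0 0).1, (hnext (n + 1) (z n)).1]

open Classical in
noncomputable def forwardSubst {K : Type*} [Field K] (u : ℕ → ℕ → K) (c : ℕ → K) (p : ℕ → ℕ)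
    (g₀ : ℕ → K) (n : ℕ) : K :=
  if n ∈ range p then
    (c (invFun p n) - ∑ m : Fin n, forwardSubst u c p g₀ m * u (invFun p n) m) / u (invFun p n) n
  else g₀ n

section forwardSubst

variable {K : Type*} [Field K] {u : ℕ → ℕ → K} {c : ℕ → K} {p : ℕ → ℕ} {g₀ : ℕ → K}

theorem forwardSubst_of_notMem_range {n : ℕ} (hn : n ∉ range p) :
    forwardSubst u c p g₀ n = g₀ n := by
  rw [forwardSubst, if_neg hn]

theorem sum_range_forwardSubst_mul (hp : Injective p) {k : ℕ} (hk : u k (p k) ≠ 0) :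
    ∑ n ∈ Finset.range (p k + 1), forwardSubst u c p g₀ n * u k n = c k := by
  rw [Finset.sum_range_succ, ← Fin.sum_univ_eq_sum_range, forwardSubst.eq_1 u c p g₀ (p k),
    if_pos (mem_range_self k), leftInverse_invFun hp k, div_mul_cancel₀ _ hk]
  ring

end forwardSubst

namespace IsAlmostDisjointFamily

variable {ι κ α : Type*}

theorem sum_elim {A : ι → Set α} {B : κ → Set α} (hA : IsAlmostDisjointFamily A)
    (hB : IsAlmostDisjointFamily B) (hAB : ∀ i k, (A i ∩ B k).Finite) :
    IsAlmostDisjointFamily (Sum.elim A B) := by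
  refine ⟨Sum.forall.2 ⟨hA.1, hB.1⟩, ?_⟩
  rintro (i | k) (j | l) hne
  · exact hA.2 fun h => hne (congrArg _ h)
  · exact hAB i l
  · exact inter_comm (A j) (B k) ▸ hAB j k
  · exact hB.2 fun h => hne (congrArg _ h)

theorem infinite_diff_biUnion_lt {A : ℕ → Set α} (hA : IsAlmostDisjointFamily A) (k : ℕ) :
    (A k \ ⋃ m < k, A m).Infinite := by
  have hfin : (A k ∩ ⋃ m < k, A m).Finite := by
    rw [inter_iUnion₂]
    exact (finite_lt_nat k).biUnion fun m hm => hA.2 (ne_of_gt hm)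
  simpa only [sdiff_self_inter] using (hA.1 k).sdiff hfin

theorem exists_hasSum_mul_nat {u : ℕ → ℕ → ℝ}
    (hu : IsAlmostDisjointFamily fun k => support (u k)) (c : ℕ → ℝ) :
    ∃ w : ℕ → ℝ, (support w).Infinite ∧
      ∀ k, (support w ∩ support (u k)).Finite ∧ HasSum (fun n => w n * u k n) (c k) := by
  obtain ⟨z, hz, hzu⟩ :=
    exists_strictMono_forall_mem _ fun m => hu.infinite_diff_biUnion_lt (m / 2)
  -- `w (z (2 * k)) = 1` keeps the support of `w` infinite, `w (z (2 * k + 1))` solves equation `k`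
  let q : ℕ → ℕ := fun k => z (2 * k)
  let p : ℕ → ℕ := fun k => z (2 * k + 1)
  have hp : Injective p := hz.injective.comp fun k l h => by omega
  have hq : Injective q := hz.injective.comp fun k l h => by omega
  let w := forwardSubst u c p (indicator (range q) 1)
  have hw_of_notMem : ∀ n ∉ range p, w n = indicator (range q) 1 n :=
    fun n hn => forwardSubst_of_notMem_range hn
  have hw_supp : support w ⊆ range z := by
    intro n hn
    by_cases hnp : n ∈ range p
    · obtain ⟨k, rfl⟩ := hnp; exact mem_range_self _
    · rw [mem_support, hw_of_notMem n hnp] at hn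
      obtain ⟨k, rfl⟩ := mem_of_indicator_ne_zero hn
      exact mem_range_self _
  have hw_q : ∀ k, w (q k) = 1 := fun k => by
    rw [hw_of_notMem _ fun ⟨l, hl⟩ => by have := hz.injective hl; omega,
      indicator_of_mem (mem_range_self k), Pi.one_apply]
  have hz_supp : ∀ k m, z m ∈ support (u k) → m ≤ 2 * k + 1 := fun k m hm => by
    by_contra hlt
    exact (hzu m).2 (mem_biUnion (show k < m / 2 by omega) hm)
  have hwu : ∀ k, support w ∩ support (u k) ⊆ z '' Iic (2 * k + 1) := by
    rintro k n ⟨hnw, hnu⟩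
    obtain ⟨m, rfl⟩ := hw_supp hnw
    exact ⟨m, hz_supp k m hnu, rfl⟩
  refine ⟨w, ?_, fun k => ⟨((finite_Iic _).image z).subset (hwu k), ?_⟩⟩
  · exact (infinite_range_of_injective hq).mono (range_subset_iff.2 fun k => by simp [hw_q])
  · have hpk : u k (p k) ≠ 0 := by
      have := (hzu (2 * k + 1)).1
      rwa [show (2 * k + 1) / 2 = k by omega] at this
    rw [← sum_range_forwardSubst_mul hp hpk (c := c) (g₀ := indicator (range q) 1)]
    refine hasSum_sum_of_ne_finset_zero fun n hn => ?_
    by_contra h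
    obtain ⟨m, hm, rfl⟩ := hwu k ⟨left_ne_zero_of_mul h, right_ne_zero_of_mul h⟩
    exact hn (Finset.mem_range.2 (Nat.lt_succ_of_le (hz.monotone hm)))

theorem exists_hasSum_mul [Countable ι] [Infinite ι] {u : ι → ℕ → ℝ}
    (hu : IsAlmostDisjointFamily fun i => support (u i)) (c : ι → ℝ) :
    ∃ w : ℕ → ℝ, (support w).Infinite ∧
      ∀ i, (support w ∩ support (u i)).Finite ∧ HasSum (fun n => w n * u i n) (c i) := by
  obtain ⟨_⟩ := nonempty_denumerable ι
  let e := Denumerable.eqv ι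
  obtain ⟨w, hw, hwu⟩ := exists_hasSum_mul_nat (u := fun k => u (e.symm k))
    ⟨fun k => hu.1 _, fun k l hkl => hu.2 (e.symm.injective.ne hkl)⟩ (fun k => c (e.symm k))
  exact ⟨w, hw, fun i => by simpa using hwu (e i)⟩

end IsAlmostDisjointFamily

theorem exists_isAlmostDisjointFamily_nat :
    ∃ b : ℕ → ℕ → ℝ, IsAlmostDisjointFamily fun k => support (b k) := by
  let b : ℕ → ℕ → ℝ := fun k n => if (Nat.unpair n).1 = k then 1 else 0
  have hb : ∀ k, support (b k) = {n | (Nat.unpair n).1 = k} := fun k => by ext n; simp [b]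
  refine ⟨b, fun k => ?_, fun k l hkl => ?_⟩
  · simp only [hb]
    refine infinite_of_injective_forall_mem (f := Nat.pair k) (fun m m' h => ?_) (by simp)
    simpa using congrArg (fun n => (Nat.unpair n).2) h
  · simp only [hb]
    exact finite_empty.subset fun n hn => hkl (hn.1.symm.trans hn.2)

theorem WellFoundedLT.exists_forall_of_exists_update {J β : Type*} [PartialOrder J]
    [WellFoundedLT J] [DecidableEq J] [Nonempty β] (P : (J → β) → J → Prop)
    (hP : ∀ v v' j, EqOn v v' (Iic j) → P v j → P v' j)
    (hstep : ∀ v j, (∀ i < j, P v i) → ∃ b, P (update v j b) j) :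
    ∃ v : J → β, ∀ j, P v j := by
  classical
  let below (j : J) (prev : ∀ i < j, β) : J → β := fun i =>
    if h : i < j then prev i h else Classical.arbitrary β
  let v : J → β := wellFounded_lt.fix fun j prev =>
    if h : ∃ b, P (update (below j prev) j b) j then h.choose else Classical.arbitrary β
  refine ⟨v, fun j => wellFounded_lt.induction j fun j ih => ?_⟩
  let w := below j fun i _ => v i
  have hw : ∀ i < j, w i = v i := fun i hi => dif_pos hi
  have hex : ∃ b, P (update w j b) j :=
    hstep w j fun i hi => hP v w i (fun i' hi' => (hw i' (lt_of_le_of_lt hi' hi)).symm) (ih i hi)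
  have hvj : v j = hex.choose := (wellFounded_lt.fix_eq _ j).trans (dif_pos hex)
  refine hP _ v j (fun i hi => ?_) hex.choose_spec
  rcases eq_or_ne i j with rfl | hij
  · rw [update_self, hvj]
  · rw [update_of_ne hij, hw i (lt_of_le_of_ne hi hij)]

theorem exists_hasSum_mul_of_lt_of_countable_Iio {J : Type*} [LinearOrder J] [WellFoundedLT J]
    (hJ : ∀ j : J, (Iio j).Countable) (c : J → J → ℝ) :
    ∃ v : J → ℕ → ℝ, ∀ i j, i < j → HasSum (fun n => v j n * v i n) (c j i) := by
  obtain ⟨b, hb⟩ := exists_isAlmostDisjointFamily_nat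
  -- `b` keeps the family infinite at every stage, so the first vectors cannot exhaust `ℕ`
  let P (v : J → ℕ → ℝ) (j : J) : Prop :=
    (support (v j)).Infinite ∧ (∀ k, (support (v j) ∩ support (b k)).Finite) ∧
      ∀ i < j, (support (v j) ∩ support (v i)).Finite ∧ HasSum (fun n => v j n * v i n) (c j i)
  have hP : ∀ v v' j, EqOn v v' (Iic j) → P v j → P v' j := by
    rintro v v' j hvv' ⟨hinf, hb', heq⟩
    simp only [P]
    rw [← hvv' (mem_Iic.2 le_rfl)]
    refine ⟨hinf, hb', fun i hi => ?_⟩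
    rw [← hvv' (mem_Iic.2 hi.le)]
    exact heq i hi
  have hstep : ∀ v j, (∀ i < j, P v i) → ∃ w, P (update v j w) j := by
    intro v j hv
    have : Countable (Iio j) := (hJ j).to_subtype
    have hfam : IsAlmostDisjointFamily (Sum.elim (fun k => support (b k))
        fun i : Iio j => support (v i)) := by
      refine hb.sum_elim ⟨fun i => (hv i i.2).1, fun i i' hne => ?_⟩
        fun k i => inter_comm (support (b k)) _ ▸ (hv i i.2).2.1 k
      rcases lt_or_gt_of_ne (Subtype.coe_injective.ne hne) with h | h
      · exact inter_comm (support (v i')) _ ▸ ((hv i' i'.2).2.2 i h).1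
      · exact ((hv i i.2).2.2 i' h).1
    obtain ⟨w, hw, hwu⟩ := IsAlmostDisjointFamily.exists_hasSum_mul
      (u := Sum.elim b fun i : Iio j => v i) (by convert hfam using 1; ext (k | i) : 1 <;> rfl)
      (Sum.elim 0 fun i => c j i)
    refine ⟨w, ?_⟩
    simp only [P, update_self]
    refine ⟨hw, fun k => (hwu (.inl k)).1, fun i hi => ?_⟩
    rw [update_of_ne hi.ne]
    exact hwu (.inr ⟨i, hi⟩)
  obtain ⟨v, hv⟩ := WellFoundedLT.exists_forall_of_exists_update P hP hstep
  exact ⟨v, fun i j hij => ((hv j).2.2 i hij).2⟩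

theorem davies_of_countable_Iio {X : Type*} [LinearOrder X] [WellFoundedLT X]
    (hX : ∀ x : X, (Iio x).Countable) (f : X → X → ℝ) :
    ∃ g h : ℕ → X → ℝ, ∀ x y, HasSum (fun n => g n x * h n y) (f x y) := by
  -- index `gₓ` by `(x, false)` and `hₓ` by `(x, true)`, so each pair is settled at its later index
  have hJ : ∀ j : X ×ₗ Bool, (Iio j).Countable := by
    intro j
    refine ((((hX (ofLex j).1).insert (ofLex j).1).prod countable_univ).image toLex).mono
      fun i hi => ?_
    refine ⟨ofLex i, ⟨?_, trivial⟩, rfl⟩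
    rcases Prod.Lex.lt_iff.1 hi with h | h
    exacts [Or.inr h, Or.inl h.1]
  let c : X ×ₗ Bool → X ×ₗ Bool → ℝ := fun j i =>
    match ofLex j, ofLex i with
    | (x, false), (y, true) => f x y
    | (y, true), (x, false) => f x y
    | _, _ => 0
  obtain ⟨v, hv⟩ := exists_hasSum_mul_of_lt_of_countable_Iio hJ c
  refine ⟨fun n x => v (toLex (x, false)) n, fun n y => v (toLex (y, true)) n, fun x y => ?_⟩
  rcases le_or_gt x y with hxy | hyx
  · simpa [mul_comm, c] using hv (toLex (x, false)) (toLex (y, true))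
      (Prod.Lex.toLex_lt_toLex.2 (hxy.lt_or_eq.imp id fun h => ⟨h, Bool.false_lt_true⟩))
  · simpa [c] using hv (toLex (y, true)) (toLex (x, false)) (Prod.Lex.toLex_lt_toLex.2 (.inl hyx))

theorem countable_Iio_toType_ord_aleph_one (w : (Cardinal.aleph 1).ord.ToType) :
    (Iio w).Countable := by
  have h := Cardinal.mk_Iio_lt w (by simp)
  rw [Cardinal.mk_ord_toType, Cardinal.lt_aleph_one_iff] at h
  exact Cardinal.le_aleph0_iff_set_countable.1 h

/-- Davies' theorem: CH implies that every `f : ℝ × ℝ → ℝ` can be written as a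
pointwise convergent series `f (x, y) = Σₙ g⁰ₙ x * g¹ₙ y`. -/
theorem davies_of_CH (hCH : Cardinal.continuum = Cardinal.aleph 1) :
    ∀ f : ℝ × ℝ → ℝ, ∃ g0 g1 : ℕ → ℝ → ℝ, ∀ x y : ℝ,
      Filter.Tendsto (fun N => ∑ n ∈ Finset.range N, g0 n x * g1 n y)
        Filter.atTop (nhds (f (x, y))) := by
  intro f
  have hCH₀ : Cardinal.continuum.{0} = Cardinal.aleph 1 :=
    Cardinal.lift_injective (by simpa using hCH)
  obtain ⟨e⟩ : Nonempty (ℝ ≃ (Cardinal.aleph.{0} 1).ord.ToType) := by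
    rw [← Cardinal.eq, Cardinal.mk_real, Cardinal.mk_ord_toType, hCH₀]
  obtain ⟨g, h, hgh⟩ := davies_of_countable_Iio countable_Iio_toType_ord_aleph_one
    fun a b => f (e.symm a, e.symm b)
  exact ⟨fun n x => g n (e x), fun n y => h n (e y), fun x y => by
    simpa using (hgh (e x) (e y)).tendsto_sum_nat⟩
end

section
/- If there exists a spread family F ⊆ ω^ω, then the unbounding number 𝔟 equals ℵ₁. -/
/-- The type ω₁, realized as the ordinals below `(aleph 1).ord`. -/
abbrev Omega1 : Type 1 := {o : Ordinal // o < (Cardinal.aleph 1).ord}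

/-- An uncountable family `F ⊆ ω^ω` is *spread* if for each `k*, n* < ω` and every
sequence `⟨f_{α,n} : α < ω₁, n < n*⟩` of pairwise distinct members of `F` there are an
increasing sequence `⟨α_i : i < ω⟩ ⊆ ω₁` and `k > k*` with
`f_{α_i,n}(k) < f_{α_{i+1},n}(k)` for all `i < ω`, `n < n*`. -/
def Spread (F : Set (ℕ → ℕ)) : Prop :=
  ¬ F.Countable ∧
  ∀ (kStar nStar : ℕ) (f : Omega1 → ℕ → (ℕ → ℕ)),
    (∀ α n, n < nStar → f α n ∈ F) →
    (∀ α α' n m, n < nStar → m < nStar → (α, n) ≠ (α', m) → f α n ≠ f α' m) →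
    ∃ a : ℕ → Omega1, StrictMono a ∧
      ∃ k, kStar < k ∧ ∀ i n, n < nStar → f (a i) n k < f (a (i + 1)) n k


/-- The unbounding number 𝔟: the least cardinality of a family in `ω^ω` unbounded in
the eventual dominance order. -/
noncomputable def unboundingNumber : Cardinal :=
  sInf { c | ∃ F : Set (ℕ → ℕ), Cardinal.mk F = c ∧
    ∀ h : ℕ → ℕ, ∃ f ∈ F, ¬ (∀ᶠ n in Filter.atTop, f n ≤ h n) }

lemma mk_Omega1 : Cardinal.mk Omega1 = Cardinal.aleph 1 := by
  have : Cardinal.mk Omega1 = Cardinal.mk (Set.Iio (Cardinal.aleph 1).ord) := rfl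
  rw [this, Ordinal.mk_Iio_ordinal, Cardinal.card_ord, Cardinal.lift_aleph,
    Ordinal.lift_one]

/-- Any countable family in `ω^ω` is eventually dominated by a single function,
so it is not unbounded. Hence every unbounded family is uncountable. -/
lemma uncountable_of_unbounded (F : Set (ℕ → ℕ))
    (hU : ∀ h : ℕ → ℕ, ∃ f ∈ F, ¬ (∀ᶠ n in Filter.atTop, f n ≤ h n)) :
    ¬ F.Countable := by
  intro hc
  have hne : F.Nonempty := by
    obtain ⟨f, hf, _⟩ := hU 0
    exact ⟨f, hf⟩
  obtain ⟨e, he⟩ := hc.exists_eq_range hne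
  set h : ℕ → ℕ := fun n => (Finset.range (n + 1)).sup (fun i => e i n) with hh
  obtain ⟨f, hfF, hfa⟩ := hU h
  apply hfa
  rw [he] at hfF
  obtain ⟨i, rfl⟩ := hfF
  rw [Filter.eventually_atTop]
  refine ⟨i, fun n hn => ?_⟩
  exact Finset.le_sup (f := fun j => e j n) (Finset.mem_range.2 (Nat.lt_succ_of_le hn))

/-- If there exists a spread family then 𝔟 = ℵ₁. -/
theorem b_eq_aleph_one_of_spread (F : Set (ℕ → ℕ)) (hF : Spread F) :
    unboundingNumber = Cardinal.aleph 1 := by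
  obtain ⟨hFu, hSp⟩ := hF
  -- choose ℵ₁-many distinct members of F
  have hF1 : Cardinal.aleph 1 ≤ Cardinal.mk F := by
    by_contra hlt
    exact hFu (((Cardinal.countable_iff_lt_aleph_one F).2 (lt_of_not_ge hlt)))
  have hemb : Nonempty (Omega1 ↪ F) := by
    rw [← Cardinal.lift_mk_le']
    rw [Cardinal.lift_uzero, mk_Omega1]
    have := Cardinal.lift_le.{1}.2 hF1
    rwa [Cardinal.lift_aleph, Ordinal.lift_one] at this
  obtain ⟨e⟩ := hemb
  set g : Omega1 → (ℕ → ℕ) := fun α => ((e α : F) : ℕ → ℕ) with hg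
  have hginj : Function.Injective g := by
    intro a b hab
    exact e.injective (Subtype.ext hab)
  set G : Set (ℕ → ℕ) := Set.range g with hG
  have hmkG : Cardinal.mk G = Cardinal.aleph 1 := by
    have h1 : Cardinal.lift.{1} (Cardinal.mk G) = Cardinal.lift.{0} (Cardinal.mk Omega1) :=
      Cardinal.mk_range_eq_lift hginj
    rw [Cardinal.lift_uzero, mk_Omega1] at h1
    have h2 : Cardinal.lift.{1} (Cardinal.aleph 1 : Cardinal.{0}) =
        (Cardinal.aleph 1 : Cardinal.{1}) := by
      rw [Cardinal.lift_aleph, Ordinal.lift_one]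
    rw [← h2] at h1
    exact Cardinal.lift_injective h1
  -- G is unbounded
  have hGunb : ∀ h : ℕ → ℕ, ∃ f ∈ G, ¬ (∀ᶠ n in Filter.atTop, f n ≤ h n) := by
    intro h
    by_contra hbd
    push_neg at hbd
    have hbd' : ∀ α : Omega1, ∃ N : ℕ, ∀ n ≥ N, g α n ≤ h n := by
      intro α
      have := hbd (g α) ⟨α, rfl⟩
      rwa [Filter.eventually_atTop] at this
    choose N hN using hbd'
    -- some fiber of N is uncountable
    have hfib : ∃ m : ℕ, ¬ (N ⁻¹' {m}).Countable := by
      by_contra hc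
      push_neg at hc
      have : (Set.univ : Set Omega1).Countable := by
        have : (Set.univ : Set Omega1) = ⋃ m, N ⁻¹' {m} := by
          ext α; simp
        rw [this]
        exact Set.countable_iUnion hc
      have hcnt : Cardinal.mk Omega1 ≤ Cardinal.aleph0 := by
        rw [← Cardinal.mk_univ]
        exact this.le_aleph0
      rw [mk_Omega1] at hcnt
      exact absurd hcnt (not_le.2 Cardinal.aleph0_lt_aleph_one)
    obtain ⟨m, hm⟩ := hfib
    -- embed ω₁ into the fiber
    have hfemb : Nonempty (Omega1 ↪ (N ⁻¹' {m})) := by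
      rw [← Cardinal.le_def, mk_Omega1]
      exact le_of_not_gt fun hlt =>
        hm ((Cardinal.countable_iff_lt_aleph_one _).2 hlt)
    obtain ⟨j⟩ := hfemb
    -- apply spreadness
    set f : Omega1 → ℕ → (ℕ → ℕ) := fun α _ => g ((j α : Omega1)) with hf
    have hmem : ∀ α n, n < 1 → f α n ∈ F := fun α n _ => (e (j α : Omega1)).2
    have hdist : ∀ α α' n n', n < 1 → n' < 1 → (α, n) ≠ (α', n') → f α n ≠ f α' n' := by
      intro α α' n n' hn hn' hne hfe
      interval_cases n
      interval_cases n'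
      have : α = α' := j.injective (Subtype.ext (hginj hfe))
      exact hne (by rw [this])
    obtain ⟨a, ha, k, hk, hval⟩ := hSp m 1 f hmem hdist
    -- the values f (a i) 0 k form a strictly increasing sequence bounded by h k
    set u : ℕ → ℕ := fun i => f (a i) 0 k with hu
    have humono : StrictMono u := strictMono_nat_of_lt_succ fun i => hval i 0 one_pos
    have hub : ∀ i, u i ≤ h k := by
      intro i
      have hNm : N (j (a i) : Omega1) = m := (j (a i)).2
      exact hN (j (a i) : Omega1) k (by rw [hNm]; exact le_of_lt hk)
    have h3 : h k + 1 ≤ u (h k + 1) := humono.le_apply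
    have h4 := hub (h k + 1)
    omega
  -- conclude
  unfold unboundingNumber
  apply le_antisymm
  · refine csInf_le (OrderBot.bddBelow _) ?_
    exact ⟨G, hmkG, hGunb⟩
  · refine le_csInf ⟨Cardinal.aleph 1, ?_⟩ ?_
    · exact ⟨G, hmkG, hGunb⟩
    rintro c ⟨F', hmk, hunb⟩
    rw [← hmk]
    by_contra hlt
    exact uncountable_of_unbounded F' hunb
      ((Cardinal.countable_iff_lt_aleph_one F').2 (lt_of_not_ge hlt))
end

section
/- Every spread family F ⊆ ω^ω is unbounded in the eventual dominance order; that is, there is no single h ∈ ω^ω with f ≤* h for all f ∈ F. -/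
/-- A spread family is unbounded in the eventual dominance order: no single `h`
eventually dominates all of its members. -/
theorem spread_unbounded (F : Set (ℕ → ℕ)) (hF : Spread F) :
    ¬ ∃ h : ℕ → ℕ, ∀ f ∈ F, ∀ᶠ n in Filter.atTop, f n ≤ h n := by
  rintro ⟨h, hh⟩
  obtain ⟨hunc, hsp⟩ := hF
  set S : ℕ → Set (ℕ → ℕ) := fun N => {f | f ∈ F ∧ ∀ n, N ≤ n → f n ≤ h n} with hSdef
  have hcover : F ⊆ ⋃ N, S N := by
    intro f hf
    obtain ⟨N, hN⟩ := Filter.eventually_atTop.1 (hh f hf)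
    exact Set.mem_iUnion.2 ⟨N, hf, hN⟩
  have hexN : ∃ N, ¬ (S N).Countable := by
    by_contra hc
    push_neg at hc
    exact hunc ((Set.countable_iUnion hc).mono hcover)
  obtain ⟨N, hN⟩ := hexN
  have h1 : Cardinal.aleph 1 ≤ Cardinal.mk (S N) := by
    rw [← Cardinal.succ_aleph0, Order.succ_le_iff]
    rwa [← Cardinal.le_aleph0_iff_set_countable, not_le] at hN
  have h2 : Nonempty (Omega1 ↪ (S N)) := by
    rw [← Cardinal.lift_mk_le']
    have e : (Cardinal.mk Omega1) = Cardinal.lift.{1,0} (Cardinal.aleph 1) := by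
      rw [show (Cardinal.mk Omega1) = Cardinal.mk (Set.Iio ((Cardinal.aleph 1).ord)) from rfl,
        Ordinal.mk_Iio_ordinal, Cardinal.card_ord]
    rw [e, Cardinal.lift_lift]
    exact Cardinal.lift_le.mpr h1
  obtain ⟨g⟩ := h2
  obtain ⟨a, -, k, hk, hlt⟩ := hsp N 1 (fun α _ => (g α : ℕ → ℕ))
    (fun α n _ => ((g α).2).1)
    (by
      intro α α' n m hn hm hne hEq
      interval_cases n
      interval_cases m
      exact hne (by rw [Prod.mk.injEq]; exact ⟨g.injective (Subtype.ext hEq), rfl⟩))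
  have key : ∀ i, (i : ℕ) ≤ (g (a i) : ℕ → ℕ) k := by
    intro i
    induction i with
    | zero => exact Nat.zero_le _
    | succ i ih => exact Nat.lt_of_le_of_lt ih (hlt i 0 Nat.one_pos)
  have hle : (g (a (h k + 1)) : ℕ → ℕ) k ≤ h k :=
    ((g (a (h k + 1))).2).2 k (Nat.le_of_lt hk)
  exact absurd (key (h k + 1)) (by omega)
end

section
/- Let h : (ω → ℝ) × (ω → ℝ) → ℝ be a function and let κ = κ(h,1). Assume κ < 2^κ = 𝔠 (the cardinality of the continuum). Then the property (⊛^Da_h) fails: there exists f : ℝ × ℝ → ℝ such that for no functions g⁰ₙ, g¹ₙ : ℝ → ℝ (n < ω) do we have f(x,y) = h(⟨g⁰ₙ(x)⟩ₙ, ⟨g¹ₙ(y)⟩ₙ) for all x, y ∈ ℝ. -/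
/-- `κ(h,n)`: the least `|𝒜₀| + |𝒜₁|` over pairs of families `𝒜₀, 𝒜₁` of subsets of
`ω → ℝ` such that every `n`-element subset of `ω → ℝ` lies inside some member of `𝒜₀`
and inside some member of `𝒜₁`, while `h[A₀ × A₁] ≠ ℝ` for all `A₀ ∈ 𝒜₀`, `A₁ ∈ 𝒜₁`. -/
noncomputable def kappa (h : (ℕ → ℝ) × (ℕ → ℝ) → ℝ) (n : ℕ) : Cardinal :=
  sInf { c | ∃ A0 A1 : Set (Set (ℕ → ℝ)),
    c = Cardinal.mk A0 + Cardinal.mk A1 ∧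
    (∀ w : Finset (ℕ → ℝ), w.card = n → ∃ A ∈ A0, ↑w ⊆ A) ∧
    (∀ w : Finset (ℕ → ℝ), w.card = n → ∃ A ∈ A1, ↑w ⊆ A) ∧
    ∀ A ∈ A0, ∀ B ∈ A1, h '' (A ×ˢ B) ≠ Set.univ }

/-- `κ⁻(h,n)`: the least `|𝒜|` over families `𝒜` of subsets of `ω → ℝ` such that every
`n`-element subset of `ω → ℝ` lies inside some member of `𝒜` and `h[A × A] ≠ ℝ` for
every `A ∈ 𝒜`. -/
noncomputable def kappaMinus (h : (ℕ → ℝ) × (ℕ → ℝ) → ℝ) (n : ℕ) : Cardinal :=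
  sInf { c | ∃ A : Set (Set (ℕ → ℝ)),
    c = Cardinal.mk A ∧
    (∀ w : Finset (ℕ → ℝ), w.card = n → ∃ B ∈ A, ↑w ⊆ B) ∧
    ∀ B ∈ A, h '' (B ×ˢ B) ≠ Set.univ }

/-- The property `(⊛^Da_h)`. -/
def DaH (h : (ℕ → ℝ) × (ℕ → ℝ) → ℝ) : Prop :=
  ∀ f : ℝ × ℝ → ℝ, ∃ g0 g1 : ℕ → ℝ → ℝ, ∀ x y : ℝ,
    f (x, y) = h (fun n => g0 n x, fun n => g1 n y)

/-- If `κ(h,1) < 2^{κ(h,1)} = 𝔠` then `(⊛^Da_h)` fails. -/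
theorem not_DaH_of_kappa_lt_pow (h : (ℕ → ℝ) × (ℕ → ℝ) → ℝ)
    (h1 : kappa h 1 < 2 ^ kappa h 1)
    (h2 : 2 ^ kappa h 1 = Cardinal.continuum) :
    ¬ DaH h := by
  classical
  intro hDa
  -- the defining set of kappa is nonempty
  have hne : { c | ∃ A0 A1 : Set (Set (ℕ → ℝ)),
      c = Cardinal.mk A0 + Cardinal.mk A1 ∧
      (∀ w : Finset (ℕ → ℝ), w.card = 1 → ∃ A ∈ A0, ↑w ⊆ A) ∧
      (∀ w : Finset (ℕ → ℝ), w.card = 1 → ∃ A ∈ A1, ↑w ⊆ A) ∧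
      ∀ A ∈ A0, ∀ B ∈ A1, h '' (A ×ˢ B) ≠ Set.univ }.Nonempty := by
    by_contra hemp
    rw [Set.not_nonempty_iff_eq_empty] at hemp
    have h0 : kappa h 1 = 0 := by
      unfold kappa; rw [hemp, Cardinal.sInf_empty]
    rw [h0, Cardinal.power_zero] at h2
    exact (Cardinal.nat_lt_continuum 1).ne (by exact_mod_cast h2)
  have hmem : ∃ A0 A1 : Set (Set (ℕ → ℝ)),
      kappa h 1 = Cardinal.mk A0 + Cardinal.mk A1 ∧
      (∀ w : Finset (ℕ → ℝ), w.card = 1 → ∃ A ∈ A0, ↑w ⊆ A) ∧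
      (∀ w : Finset (ℕ → ℝ), w.card = 1 → ∃ A ∈ A1, ↑w ⊆ A) ∧
      ∀ A ∈ A0, ∀ B ∈ A1, h '' (A ×ˢ B) ≠ Set.univ := by
    have : kappa h 1 ∈ { c | ∃ A0 A1 : Set (Set (ℕ → ℝ)),
        c = Cardinal.mk A0 + Cardinal.mk A1 ∧
        (∀ w : Finset (ℕ → ℝ), w.card = 1 → ∃ A ∈ A0, ↑w ⊆ A) ∧
        (∀ w : Finset (ℕ → ℝ), w.card = 1 → ∃ A ∈ A1, ↑w ⊆ A) ∧
        ∀ A ∈ A0, ∀ B ∈ A1, h '' (A ×ˢ B) ≠ Set.univ } := by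
      unfold kappa; exact csInf_mem hne
    exact this
  obtain ⟨A0, A1, hsum, hcov0, hcov1, hmiss⟩ := hmem
  -- kappa is infinite
  have hκinf : Cardinal.aleph0 ≤ kappa h 1 := by
    by_contra hlt
    push_neg at hlt
    have hfin : (2 : Cardinal) ^ kappa h 1 < Cardinal.aleph0 :=
      Cardinal.power_lt_aleph0 (by exact_mod_cast Cardinal.nat_lt_aleph0 2) hlt
    rw [h2] at hfin
    exact absurd hfin (not_lt.2 Cardinal.aleph0_lt_continuum.le)
  have hκc : kappa h 1 < Cardinal.continuum := h1.trans_eq h2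
  have hA1le : Cardinal.mk A1 ≤ kappa h 1 := hsum ▸ le_add_self
  -- injection ι : ↥A1 ↪ ℝ
  have hA1R : Cardinal.mk A1 ≤ Cardinal.mk ℝ := by
    rw [Cardinal.mk_real]; exact hA1le.trans hκc.le
  obtain ⟨ι⟩ := (Cardinal.le_def _ _).1 hA1R
  -- surjection σ : ℝ → (↥A1 → ℝ)
  have harrow : Cardinal.mk (↥A1 → ℝ) ≤ Cardinal.mk ℝ := by
    rw [← Cardinal.power_def, Cardinal.mk_real]
    calc Cardinal.continuum ^ Cardinal.mk A1
        ≤ Cardinal.continuum ^ kappa h 1 :=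
          Cardinal.power_le_power_left Cardinal.continuum_ne_zero hA1le
      _ = ((2 : Cardinal) ^ kappa h 1) ^ kappa h 1 := by rw [h2]
      _ = (2 : Cardinal) ^ (kappa h 1 * kappa h 1) := (Cardinal.power_mul).symm
      _ = (2 : Cardinal) ^ kappa h 1 := by rw [Cardinal.mul_eq_self hκinf]
      _ = Cardinal.continuum := h2
  obtain ⟨e⟩ := (Cardinal.le_def _ _).1 harrow
  set σ : ℝ → (↥A1 → ℝ) := Function.invFun e with hσdef
  have hσ : Function.Surjective σ := Function.invFun_surjective e.injective
  -- the defeating function f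
  obtain ⟨g0, g1, hg⟩ := hDa (fun p =>
    if hx : ∃ a : ↥A1, ι a = p.1 then σ p.2 hx.choose else 0)
  -- choose A₀(a) covering ⟨g0 n (ι a)⟩
  have hcv : ∀ a : ↥A1, ∃ A ∈ A0, (fun n => g0 n (ι a)) ∈ A := by
    intro a
    obtain ⟨A, hA, hsub⟩ := hcov0 {fun n => g0 n (ι a)} (Finset.card_singleton _)
    exact ⟨A, hA, hsub (by simp)⟩
  choose Φ hΦmem hΦin using hcv
  -- choose bad point t a ∉ h[Φ a × a]
  have hbad : ∀ a : ↥A1, ∃ r : ℝ, r ∉ h '' ((Φ a) ×ˢ (a : Set (ℕ → ℝ))) := by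
    intro a
    exact (Set.ne_univ_iff_exists_notMem _).1 (hmiss (Φ a) (hΦmem a) a a.2)
  choose t ht using hbad
  obtain ⟨y, hy⟩ := hσ t
  -- cover ⟨g1 n y⟩ by some A' ∈ A1
  obtain ⟨A', hA', hsub'⟩ := hcov1 {fun n => g1 n y} (Finset.card_singleton _)
  have hgy : (fun n => g1 n y) ∈ A' := hsub' (by simp)
  set a' : ↥A1 := ⟨A', hA'⟩ with ha'
  have hex : ∃ a : ↥A1, ι a = ι a' := ⟨a', rfl⟩
  have hch : hex.choose = a' := ι.injective hex.choose_spec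
  have heq := hg (ι a') y
  simp only [dif_pos hex] at heq
  rw [hch, hy] at heq
  exact ht a' ⟨(fun n => g0 n (ι a'), fun n => g1 n y), ⟨hΦin a', hgy⟩, heq.symm⟩
end

section
/- Suppose (⊛^Da) holds: every f : ℝ × ℝ → ℝ admits a representation f(x,y) = Σ_{n<ω} g⁰ₙ(x)·g¹ₙ(y) (pointwise convergent series) for some functions g⁰ₙ, g¹ₙ : ℝ → ℝ. Then every subset A of ℝ × ℝ belongs to the σ-algebra generated by the rectangles; in fact A ∈ ℬ_ω(ℛ₂). -/
open Set Filter TopologicalSpace Topology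

/-!
Apply `(⊛^Da)` to the indicator function of `A`. A point lies in `A` iff the partial sums at
it are eventually `> 1/2`, so `A = ⋃ N, ⋂ k ≥ N, Uₖ` where `Uₖ` is the set on which the `k`-th
partial sum exceeds `1/2`. Each `Uₖ` is the preimage of an open subset of `ℝ^ℕ × ℝ^ℕ` under
`(x, y) ↦ ((g⁰ₙ x)ₙ, (g¹ₙ y)ₙ)`; since `ℝ^ℕ` is second countable, that open set is a countable
union of open rectangles, whose preimages are rectangles. Hence `A ∈ ℬ₃(ℛ₂)`.
-/

/-- The finite levels `ℬ_n(ℛ₂)` of the hierarchy generated by rectangles in `ℝ × ℝ`: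
level `0` consists of rectangles and their complements; level `n+1` consists of
countable unions of level-`n` sets and complements of such unions. -/
def RectHierarchy : ℕ → Set (Set (ℝ × ℝ))
  | 0 => { S | ∃ A B : Set ℝ, S = A ×ˢ B ∨ S = (A ×ˢ B)ᶜ }
  | n + 1 => { S | ∃ g : ℕ → Set (ℝ × ℝ), (∀ k, g k ∈ RectHierarchy n) ∧
      (S = ⋃ k, g k ∨ S = (⋃ k, g k)ᶜ) }

lemma rectHierarchy_compl {n : ℕ} {S : Set (ℝ × ℝ)} (h : S ∈ RectHierarchy n) :
    Sᶜ ∈ RectHierarchy n := by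
  cases n with
  | zero =>
    obtain ⟨A, B, rfl | rfl⟩ := h
    · exact ⟨A, B, Or.inr rfl⟩
    · exact ⟨A, B, Or.inl (compl_compl _)⟩
  | succ n =>
    obtain ⟨g, hg, rfl | rfl⟩ := h
    · exact ⟨g, hg, Or.inr rfl⟩
    · exact ⟨g, hg, Or.inl (compl_compl _)⟩

lemma empty_mem_rectHierarchy : ∀ n, (∅ : Set (ℝ × ℝ)) ∈ RectHierarchy n
  | 0 => ⟨∅, ∅, Or.inl empty_prod.symm⟩
  | n + 1 => ⟨fun _ => ∅, fun _ => empty_mem_rectHierarchy n, Or.inl iUnion_empty.symm⟩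

lemma iUnion_mem_rectHierarchy_succ {n : ℕ} {g : ℕ → Set (ℝ × ℝ)}
    (hg : ∀ k, g k ∈ RectHierarchy n) : ⋃ k, g k ∈ RectHierarchy (n + 1) :=
  ⟨g, hg, Or.inl rfl⟩

lemma iInter_mem_rectHierarchy_succ {n : ℕ} {g : ℕ → Set (ℝ × ℝ)}
    (hg : ∀ k, g k ∈ RectHierarchy n) : ⋂ k, g k ∈ RectHierarchy (n + 1) :=
  ⟨fun k => (g k)ᶜ, fun k => rectHierarchy_compl (hg k), Or.inr (by rw [compl_iUnion]; simp)⟩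

lemma sUnion_mem_rectHierarchy_succ {n : ℕ} {S : Set (Set (ℝ × ℝ))} (hS : S.Countable)
    (hSn : S ⊆ RectHierarchy n) : ⋃₀ S ∈ RectHierarchy (n + 1) := by
  rcases S.eq_empty_or_nonempty with rfl | hne
  · rw [sUnion_empty]
    exact empty_mem_rectHierarchy (n + 1)
  · obtain ⟨g, rfl⟩ := hS.exists_eq_range hne
    exact sUnion_range g ▸ iUnion_mem_rectHierarchy_succ fun k => hSn ⟨k, rfl⟩

lemma preimage_prodMap_mem_rectHierarchy_one {X Y : Type*} [TopologicalSpace X]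
    [TopologicalSpace Y] [SecondCountableTopology X] [SecondCountableTopology Y]
    (φ : ℝ → X) (ψ : ℝ → Y) {O : Set (X × Y)} (hO : IsOpen O) :
    Prod.map φ ψ ⁻¹' O ∈ RectHierarchy 1 := by
  have hB : (image2 (· ×ˢ ·) (countableBasis X) (countableBasis Y)).Countable :=
    (countable_countableBasis X).image2 (countable_countableBasis Y) _
  rw [(isBasis_countableBasis X).prod (isBasis_countableBasis Y) |>.open_eq_sUnion' hO,
    preimage_sUnion, ← sUnion_image]
  refine sUnion_mem_rectHierarchy_succ ((hB.mono fun _ h => h.1).image _) ?_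
  rintro _ ⟨_, ⟨⟨s, -, t, -, rfl⟩, -⟩, rfl⟩
  exact ⟨φ ⁻¹' s, ψ ⁻¹' t, Or.inl (preimage_prod_map_prod φ ψ s t)⟩

lemma eq_liminf_half_lt_of_tendsto_indicator {α ι : Type*} {l : Filter ι} [l.NeBot]
    {A : Set α} {F : ι → α → ℝ} (hF : ∀ p, Tendsto (F · p) l (𝓝 (A.indicator 1 p))) :
    A = liminf (fun i => {p | 1 / 2 < F i p}) l := by
  ext p
  rw [mem_liminf_iff_eventually_mem]
  by_cases hp : p ∈ A
  · have hlim := hF p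
    rw [indicator_of_mem hp, Pi.one_apply] at hlim
    simp only [hp, true_iff]
    exact hlim.eventually (lt_mem_nhds (by norm_num))
  · have hlim := hF p
    rw [indicator_of_notMem hp] at hlim
    simp only [hp, false_iff]
    intro hev
    have hsmall := hlim.eventually (gt_mem_nhds (show (0 : ℝ) < 1 / 2 by norm_num))
    obtain ⟨i, hgt, hlt⟩ := (hev.and hsmall).exists
    exact lt_asymm hlt hgt

/-- If `(⊛^Da)` holds, then every subset of `ℝ × ℝ` lies in `ℬ_ω(ℛ₂)`, i.e. in some
finite level of the hierarchy generated by rectangles (in particular in the σ-algebra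
generated by rectangles). -/
theorem mem_rectHierarchy_of_Da
    (hDa : ∀ f : ℝ × ℝ → ℝ, ∃ g0 g1 : ℕ → ℝ → ℝ, ∀ x y : ℝ,
      Filter.Tendsto (fun N => ∑ n ∈ Finset.range N, g0 n x * g1 n y)
        Filter.atTop (nhds (f (x, y)))) :
    ∀ A : Set (ℝ × ℝ), ∃ n : ℕ, A ∈ RectHierarchy n := by
  intro A
  obtain ⟨g0, g1, hg⟩ := hDa (A.indicator 1)
  set U : ℕ → Set (ℝ × ℝ) :=
    fun N => {p | 1 / 2 < ∑ n ∈ Finset.range N, g0 n p.1 * g1 n p.2}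
  have hA : A = liminf U atTop := eq_liminf_half_lt_of_tendsto_indicator fun p => hg p.1 p.2
  have hU : ∀ N, U N ∈ RectHierarchy 1 := fun N =>
    preimage_prodMap_mem_rectHierarchy_one (fun x n => g0 n x) (fun y n => g1 n y)
      (O := {uv : (ℕ → ℝ) × (ℕ → ℝ) | 1 / 2 < ∑ n ∈ Finset.range N, uv.1 n * uv.2 n})
      (isOpen_lt continuous_const (by fun_prop))
  refine ⟨3, ?_⟩
  rw [hA, liminf_eq_iSup_iInf_of_nat']
  exact iUnion_mem_rectHierarchy_succ fun N => iInter_mem_rectHierarchy_succ fun k => hU (k + N)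
end
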